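/- Let I be a Grassmann necklace with decorated permutation π and positroid M. Suppose J ∈ M satisfies: for every alignment {i,j} of π, if i ∈ J then j ∈ J. Then J is weakly separated from every I_i, i.e., {I_1,...,I_n, J} is a weakly separated collection. -/

import Mathlib

def cpos {n : ℕ} (i a : Fin n) : ℕ := ((a - i : Fin n) : ℕ)

def CyclicallyOrdered {n : ℕ} (a b c d : Fin n) : Prop :=
  0 < cpos a b ∧ cpos a b < cpos a c ∧ cpos a c < cpos a d

instance {n : ℕ} (a b c d : Fin n) : Decidable (CyclicallyOrdered a b c d) := by
  unfold CyclicallyOrdered; infer_instance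

def WeaklySeparated {n : ℕ} (I J : Finset (Fin n)) : Prop :=
  ¬ ∃ a b a' b' : Fin n, CyclicallyOrdered a b a' b' ∧
    a ∈ I \ J ∧ a' ∈ I \ J ∧ b ∈ J \ I ∧ b' ∈ J \ I

def cycIco {n : ℕ} (i j : Fin n) : Finset (Fin n) :=
  Finset.univ.filter (fun x => cpos i x < cpos i j)

def cycIcc {n : ℕ} (i j : Fin n) : Finset (Fin n) :=
  Finset.univ.filter (fun x => cpos i x ≤ cpos i j)

def cycOpen {n : ℕ} (i j : Fin n) : Finset (Fin n) :=
  Finset.univ.filter (fun x => 0 < cpos i x ∧ cpos i x < cpos i j)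

def IsGrassmannNecklace {n : ℕ} [NeZero n] (k : ℕ) (I : Fin n → Finset (Fin n)) : Prop :=
  (∀ i, (I i).card = k) ∧ (∀ i, I i \ {i} ⊆ I (i + 1)) ∧ (∀ i, i ∉ I i → I (i + 1) = I i)

def leShift {n : ℕ} (i : Fin n) (A B : Finset (Fin n)) : Prop :=
  List.Forall₂ (· ≤ ·) ((A.image (fun x => x - i)).sort (· ≤ ·))
    ((B.image (fun x => x - i)).sort (· ≤ ·))

def MemPositroid {n : ℕ} (I : Fin n → Finset (Fin n)) (J : Finset (Fin n)) : Prop :=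
  ∀ i, leShift i (I i) J

def IsWSCollection {n : ℕ} (C : Finset (Finset (Fin n))) : Prop :=
  ∀ X ∈ C, ∀ Y ∈ C, WeaklySeparated X Y

def IsMaxWSCollection {n : ℕ} (k : ℕ) (C : Finset (Finset (Fin n))) : Prop :=
  (∀ X ∈ C, X.card = k) ∧ IsWSCollection C ∧
  ∀ C' : Finset (Finset (Fin n)), C ⊆ C' → (∀ X ∈ C', X.card = k) → IsWSCollection C' → C' = C

/-!
Suppose `a, a' ∈ J \ I_i` and `b, b' ∈ I_i \ J` interlace. Reading the circle from `i`, some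
`x ∈ {a, a'}` comes before some `y ∈ {b, b'}`. None of these four elements is fixed by `π`
(positroid membership and the necklace rule exclude loops and coloops there), so
`x ∉ I_i` gives `π⁻¹ x <ᵢ x` and `y ∈ I_i` gives `y <ᵢ π⁻¹ y`. Hence `π⁻¹ x, x, y, π⁻¹ y` are
cyclically ordered, and the alignment condition forces `y ∈ J`, a contradiction.
-/

open Finset

section Cyclic

variable {n : ℕ}

lemma cpos_eq_ite (i a : Fin n) :
    cpos i a = if i.val ≤ a.val then a.val - i.val else n + a.val - i.val := by
  have hi := i.isLt
  unfold cpos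
  rw [Fin.sub_def]
  split_ifs with h
  · have he : (n - i.val) + a.val = n + (a.val - i.val) := by omega
    simp only [he, Nat.add_mod_left, Nat.mod_eq_of_lt (by omega : a.val - i.val < n)]
  · simp only [Nat.mod_eq_of_lt (by omega : n - i.val + a.val < n)]
    omega

lemma cpos_lt (i a : Fin n) : cpos i a < n := (a - i).isLt

lemma cpos_add_one_self [NeZero n] (t : Fin n) : cpos (t + 1) t = n - 1 := by
  have h1 : (t + 1 : Fin n).val = (t.val + 1) % n := by
    rw [Fin.val_add, Fin.val_one', Nat.add_mod_mod]
  have := t.isLt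
  rw [cpos_eq_ite, h1]
  rcases Nat.lt_or_ge (t.val + 1) n with h | h
  · rw [Nat.mod_eq_of_lt h]; split_ifs <;> omega
  · rw [show t.val + 1 = n by omega, Nat.mod_self]; split_ifs <;> omega

lemma cpos_le_cpos_add_one_self [NeZero n] (t m : Fin n) : cpos (t + 1) m ≤ cpos (t + 1) t := by
  rw [cpos_add_one_self]
  have := cpos_lt (t + 1) m
  omega

lemma exists_cpos_lt_of_cyclicallyOrdered (i : Fin n) {S T : Finset (Fin n)} {a b a' b' : Fin n}
    (h : CyclicallyOrdered a b a' b') (ha : a ∈ S) (ha' : a' ∈ S) (hb : b ∈ T) (hb' : b' ∈ T) :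
    ∃ x ∈ S, ∃ y ∈ T, cpos i x < cpos i y := by
  by_contra! hcon
  have h1 := hcon a ha b hb
  have h2 := hcon a ha b' hb'
  have h3 := hcon a' ha' b hb
  have h4 := hcon a' ha' b' hb'
  obtain ⟨hc1, hc2, hc3⟩ := h
  have := i.isLt; have := a.isLt; have := b.isLt; have := a'.isLt; have := b'.isLt
  simp only [cpos_eq_ite] at h1 h2 h3 h4 hc1 hc2 hc3
  split_ifs at h1 h2 h3 h4 hc1 hc2 hc3 <;> omega

lemma cyclicallyOrdered_of_cpos_lt {i w x y z : Fin n} (h1 : cpos i w < cpos i x)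
    (h2 : cpos i x < cpos i y) (h3 : cpos i y < cpos i z) : CyclicallyOrdered w x y z := by
  have := i.isLt; have := w.isLt; have := x.isLt; have := y.isLt; have := z.isLt
  unfold CyclicallyOrdered
  simp only [cpos_eq_ite] at h1 h2 h3 ⊢
  split_ifs at h1 h2 h3 ⊢ <;> omega

open Fin.NatCast in
lemma cpos_induction [NeZero n] {P : Fin n → Prop} {i : Fin n} {D : ℕ} (h0 : P i)
    (hstep : ∀ j, cpos i j < D → P j → P (j + 1)) : ∀ j, cpos i j ≤ D → P j := by
  have hcast : ∀ d < n, cpos i (i + (d : Fin n)) = d := fun d hd => by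
    rw [cpos, add_sub_cancel_left, Fin.val_natCast, Nat.mod_eq_of_lt hd]
  have key : ∀ d, d ≤ D → d < n → P (i + (d : Fin n)) := by
    intro d
    induction d with
    | zero => intro _ _; simpa using h0
    | succ d ih =>
      intro hD hn
      have := hstep _ (by rw [hcast d (by omega)]; omega) (ih (by omega) (by omega))
      rwa [Nat.cast_succ, ← add_assoc]
  intro j hj
  simpa [cpos] using key (cpos i j) hj (cpos_lt i j)

end Cyclic

section LeShift

lemma Finset.card_eq_of_forall₂_sort {α : Type*} [LinearOrder α] {s t : Finset α}
    (h : List.Forall₂ (· ≤ ·) s.sort t.sort) : s.card = t.card := by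
  simpa using h.length_eq

lemma Finset.min'_le_min'_of_forall₂_sort {α : Type*} [LinearOrder α] {s t : Finset α}
    (h : List.Forall₂ (· ≤ ·) s.sort t.sort) (hs : s.Nonempty) (ht : t.Nonempty) :
    s.min' hs ≤ t.min' ht := by
  rw [min'_eq_sorted_zero, min'_eq_sorted_zero]
  exact (List.forall₂_iff_get.mp h).2 _ _ _

lemma Finset.max'_le_max'_of_forall₂_sort {α : Type*} [LinearOrder α] {s t : Finset α}
    (h : List.Forall₂ (· ≤ ·) s.sort t.sort) (hs : s.Nonempty) (ht : t.Nonempty) :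
    s.max' hs ≤ t.max' ht := by
  have hlen := h.length_eq
  rw [max'_eq_sorted_last, max'_eq_sorted_last]
  simp only [← hlen]
  exact (List.forall₂_iff_get.mp h).2 _ _ _

variable {n : ℕ} [NeZero n]

lemma self_mem_of_leShift {i : Fin n} {A B : Finset (Fin n)} (hle : leShift i A B)
    (hiB : i ∈ B) : i ∈ A := by
  have h0 : (0 : Fin n) ∈ B.image (· - i) := mem_image.mpr ⟨i, hiB, sub_self i⟩
  have hA : (A.image (· - i)).Nonempty :=
    card_pos.mp (by rw [card_eq_of_forall₂_sort hle]; exact card_pos.mpr ⟨0, h0⟩)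
  have hmin : (A.image (· - i)).min' hA = 0 :=
    le_antisymm ((min'_le_min'_of_forall₂_sort hle hA ⟨0, h0⟩).trans (min'_le _ 0 h0))
      (Fin.zero_le _)
  obtain ⟨x, hx, hx0⟩ := mem_image.mp (hmin ▸ min'_mem _ hA)
  rwa [sub_eq_zero.mp hx0] at hx

lemma mem_of_leShift_add_one {t : Fin n} {A B : Finset (Fin n)} (hle : leShift (t + 1) A B)
    (htA : t ∈ A) : t ∈ B := by
  have htop : ∀ x : Fin n, x ≤ t - (t + 1) := fun x => by
    rw [Fin.le_def, ← cpos, cpos_add_one_self]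
    have := x.isLt; omega
  have hmA : t - (t + 1) ∈ A.image (· - (t + 1)) := mem_image.mpr ⟨t, htA, rfl⟩
  have hB : (B.image (· - (t + 1))).Nonempty :=
    card_pos.mp (by rw [← card_eq_of_forall₂_sort hle]; exact card_pos.mpr ⟨_, hmA⟩)
  have hmax : (B.image (· - (t + 1))).max' hB = t - (t + 1) :=
    le_antisymm (htop _) ((le_max' _ _ hmA).trans (max'_le_max'_of_forall₂_sort hle ⟨_, hmA⟩ hB))
  obtain ⟨x, hx, hxt⟩ := mem_image.mp (hmax ▸ max'_mem _ hB)
  rwa [sub_left_injective hxt] at hx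

end LeShift

def IsDecoratedPerm {n : ℕ} [NeZero n] (I : Fin n → Finset (Fin n)) (π : Equiv.Perm (Fin n)) :
    Prop :=
  ∀ i, (i ∈ I i → I (i + 1) = insert (π i) (I i \ {i})) ∧ (i ∉ I i → π i = i)

namespace IsGrassmannNecklace

variable {n k : ℕ} [NeZero n] {I : Fin n → Finset (Fin n)} {π : Equiv.Perm (Fin n)}

lemma succ_subset_insert (hI : IsGrassmannNecklace k I) (hπ : IsDecoratedPerm I π) (m : Fin n) :
    I (m + 1) ⊆ insert (π m) (I m) := by
  by_cases hm : m ∈ I m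
  · rw [(hπ m).1 hm]
    exact insert_subset_insert _ sdiff_subset
  · rw [hI.2.2 m hm]
    exact subset_insert _ _

lemma mem_of_cpos_le (hI : IsGrassmannNecklace k I) {i t : Fin n} (ht : t ∈ I i) :
    ∀ j, cpos i j ≤ cpos i t → t ∈ I j :=
  cpos_induction ht fun j hj htj =>
    hI.2.1 j (mem_sdiff.mpr ⟨htj, fun h => hj.ne (by rw [mem_singleton.mp h])⟩)

lemma notMem_of_cpos_le (hI : IsGrassmannNecklace k I) (hπ : IsDecoratedPerm I π)
    {i t : Fin n} (ht : t ∉ I i) : ∀ j, cpos i j ≤ cpos i (π.symm t) → t ∉ I j :=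
  cpos_induction ht fun j hj htj htj' =>
    (mem_insert.mp (hI.succ_subset_insert hπ j htj')).elim
      (fun h => hj.ne (by rw [h, π.symm_apply_apply])) htj

/-- Otherwise `I (p + 1) = I p \ {p}` would have only `k - 1` elements. -/
lemma apply_eq_self_of_apply_mem (hI : IsGrassmannNecklace k I) (hπ : IsDecoratedPerm I π)
    {p : Fin n} (h : π p ∈ I p) : π p = p := by
  by_cases hp : p ∈ I p
  · by_contra hne
    have hcard := hI.1 (p + 1)
    rw [(hπ p).1 hp, insert_eq_of_mem (mem_sdiff.mpr ⟨h, by simpa using hne⟩),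
      card_sdiff_of_subset (singleton_subset_iff.mpr hp), card_singleton, hI.1 p] at hcard
    have : 0 < k := hI.1 p ▸ card_pos.mpr ⟨p, hp⟩
    omega
  · exact (hπ p).2 hp

lemma mem_of_apply_eq_self (hI : IsGrassmannNecklace k I) (hπ : IsDecoratedPerm I π)
    {t : Fin n} (ht : t ∈ I t) (hfix : π t = t) (m : Fin n) : t ∈ I m := by
  have h : t ∈ I (t + 1) := by
    rw [(hπ t).1 ht, hfix]
    exact mem_insert_self _ _
  exact hI.mem_of_cpos_le h m (cpos_le_cpos_add_one_self t m)

lemma notMem_of_apply_eq_self (hI : IsGrassmannNecklace k I) (hπ : IsDecoratedPerm I π)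
    {t : Fin n} (ht : t ∉ I t) (hfix : π t = t) (m : Fin n) : t ∉ I m := by
  have h : t ∉ I (t + 1) := by rwa [hI.2.2 t ht]
  have hsymm : π.symm t = t := π.symm_apply_eq.mpr hfix.symm
  exact hI.notMem_of_cpos_le hπ h m (by rw [hsymm]; exact cpos_le_cpos_add_one_self t m)

lemma cpos_lt_cpos_symm (hI : IsGrassmannNecklace k I) (hπ : IsDecoratedPerm I π)
    {i t : Fin n} (ht : t ∈ I i) (hne : π t ≠ t) : cpos i t < cpos i (π.symm t) := by
  by_contra! h
  have hmem : π (π.symm t) ∈ I (π.symm t) := by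
    rw [π.apply_symm_apply]
    exact hI.mem_of_cpos_le ht _ h
  have hfix := hI.apply_eq_self_of_apply_mem hπ hmem
  rw [π.apply_symm_apply] at hfix
  exact hne (π.symm_apply_eq.mp hfix.symm).symm

lemma cpos_symm_lt_cpos (hI : IsGrassmannNecklace k I) (hπ : IsDecoratedPerm I π)
    {i t : Fin n} (ht : t ∉ I i) (hne : π t ≠ t) : cpos i (π.symm t) < cpos i t := by
  by_contra! h
  exact hne ((hπ t).2 (hI.notMem_of_cpos_le hπ ht t h))

variable {J : Finset (Fin n)} {i : Fin n}

lemma cpos_symm_lt_cpos_of_mem_sdiff (hI : IsGrassmannNecklace k I) (hπ : IsDecoratedPerm I π)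
    (hJ : MemPositroid I J) {x : Fin n} (hx : x ∈ J \ I i) : cpos i (π.symm x) < cpos i x := by
  obtain ⟨hxJ, hxI⟩ := mem_sdiff.mp hx
  refine hI.cpos_symm_lt_cpos hπ hxI fun hfix => ?_
  by_cases hxx : x ∈ I x
  · exact hxI (hI.mem_of_apply_eq_self hπ hxx hfix i)
  · exact hxx (self_mem_of_leShift (hJ x) hxJ)

lemma cpos_lt_cpos_symm_of_mem_sdiff (hI : IsGrassmannNecklace k I) (hπ : IsDecoratedPerm I π)
    (hJ : MemPositroid I J) {y : Fin n} (hy : y ∈ I i \ J) : cpos i y < cpos i (π.symm y) := by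
  obtain ⟨hyI, hyJ⟩ := mem_sdiff.mp hy
  refine hI.cpos_lt_cpos_symm hπ hyI fun hfix => ?_
  by_cases hyy : y ∈ I y
  · exact hyJ (mem_of_leShift_add_one (hJ (y + 1)) (hI.mem_of_apply_eq_self hπ hyy hfix (y + 1)))
  · exact hI.notMem_of_apply_eq_self hπ hyy hfix i hyI

end IsGrassmannNecklace

theorem stmt_16_general {n k : ℕ} [NeZero n] (I : Fin n → Finset (Fin n))
    (hI : IsGrassmannNecklace k I) (π : Equiv.Perm (Fin n))
    (hπ : ∀ i : Fin n, (i ∈ I i → I (i + 1) = insert (π i) (I i \ {i})) ∧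
      (i ∉ I i → π i = i))
    (J : Finset (Fin n)) (hJ : MemPositroid I J)
    (halign : ∀ i j : Fin n,
      CyclicallyOrdered (π.symm i) i j (π.symm j) → i ∈ J → j ∈ J) :
    ∀ i : Fin n, WeaklySeparated J (I i) := by
  rintro i ⟨a, b, a', b', hcyc, ha, ha', hb, hb'⟩
  obtain ⟨x, hx, y, hy, hxy⟩ := exists_cpos_lt_of_cyclicallyOrdered i hcyc ha ha' hb hb'
  have hcyc' : CyclicallyOrdered (π.symm x) x y (π.symm y) :=
    cyclicallyOrdered_of_cpos_lt (hI.cpos_symm_lt_cpos_of_mem_sdiff hπ hJ hx) hxy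
      (hI.cpos_lt_cpos_symm_of_mem_sdiff hπ hJ hy)
  exact (mem_sdiff.mp hy).2 (halign x y hcyc' (mem_sdiff.mp hx).1)

/-- If J ∈ M_I satisfies the alignment condition for the decorated permutation
π of the necklace (for strands i, j with π⁻¹(i), i, j, π⁻¹(j) cyclically
ordered, i ∈ J implies j ∈ J), then J is weakly separated from every I_i. -/
theorem stmt_16 {n k : ℕ} [NeZero n] (I : Fin n → Finset (Fin n))
    (hI : IsGrassmannNecklace k I) (π : Equiv.Perm (Fin n))
    (hπ : ∀ i : Fin n, (i ∈ I i → I (i + 1) = insert (π i) (I i \ {i})) ∧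
      (i ∉ I i → π i = i))
    (J : Finset (Fin n)) (hJk : J.card = k) (hJ : MemPositroid I J)
    (halign : ∀ i j : Fin n,
      CyclicallyOrdered (π.symm i) i j (π.symm j) → i ∈ J → j ∈ J) :
    ∀ i : Fin n, WeaklySeparated J (I i) :=
  stmt_16_general I hI π hπ J hJ halign
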